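/- Let k ≥ 1, n = k+1, α ∈ 𝓑 with Frobenius diagonal length m, and 1 ≤ i ≤ k+1. Suppose some cell of T with arm length i−1 lies strictly above the diagonal of T, and let u be the smallest row index of such a cell. Then u > m. -/
import Mathlib


/-- The skew diagram with rows `a,…,b`, where row `i` contains the cells
`(i,j)` for `lo i ≤ j ≤ hi i`. -/
def skewD (a b : ℕ) (lo hi : ℕ → ℕ) : Finset (ℕ × ℕ) :=
  (Finset.Icc a b).biUnion fun i => (Finset.Icc (lo i) (hi i)).image fun j => (i, j)

/-- Arm length: number of cells of `G` in the same row, strictly to the right. -/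
def arm (G : Finset (ℕ × ℕ)) (x : ℕ × ℕ) : ℕ :=
  (G.filter fun y => y.1 = x.1 ∧ x.2 < y.2).card

/-- Leg length: number of cells of `G` in the same column, strictly below
(rows are numbered bottom to top). -/
def leg (G : Finset (ℕ × ℕ)) (x : ℕ × ℕ) : ℕ :=
  (G.filter fun y => y.2 = x.2 ∧ y.1 < x.1).card

/-- Multiset of arm–leg pairs of the cells of `E`, computed in `G`. -/
def AL (G E : Finset (ℕ × ℕ)) : Multiset (ℕ × ℕ) :=
  E.val.map fun x => (arm G x, leg G x)

/-- Multiset of hook lengths of `G`. -/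
def hookMS (G : Finset (ℕ × ℕ)) : Multiset ℕ :=
  G.val.map fun x => arm G x + leg G x + 1

/-- The skew diagram `T`. -/
def TT (n k : ℕ) (α : ℕ → ℕ) : Finset (ℕ × ℕ) :=
  skewD 1 k (fun i => α 1 - α i + 1) (fun i => n + α 1 - α i)

/-- The skew diagram `V`. -/
def VV (n k : ℕ) (α : ℕ → ℕ) : Finset (ℕ × ℕ) :=
  skewD (k + 1) (2 * k) (fun i => n + α 1 - α (i - k) + 1) (fun _ => n + α 1)

/-- The skew diagram `SQ = T ∪ V`. -/
def SQ (n k : ℕ) (α : ℕ → ℕ) : Finset (ℕ × ℕ) :=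
  TT n k α ∪ VV n k α

/-- The `k × n` rectangle `R`. -/
def RR (n k : ℕ) : Finset (ℕ × ℕ) :=
  skewD 1 k (fun _ => 1) (fun _ => n)

/-- The Young diagram `D` of `α`. -/
def DD (k : ℕ) (α : ℕ → ℕ) : Finset (ℕ × ℕ) :=
  skewD 1 k (fun _ => 1) (fun i => α (k + 1 - i))

/-- The 180° rotation `T*` of `T`. -/
def Tstar (n k : ℕ) (α : ℕ → ℕ) : Finset (ℕ × ℕ) :=
  skewD 1 k (fun i => α (k + 1 - i) - α k + 1) (fun i => n + α (k + 1 - i) - α k)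

/-- `α` has Frobenius form `(λ₁,…,λ_m | λ₁−1,…,λ_m−1)` with
`k ≥ λ₁ > ⋯ > λ_m > 0`: equivalently `α_j = λ_j + j` for `1 ≤ j ≤ m`,
`α_j ≤ m` for `m < j ≤ k`, and the conjugate partition satisfies
`α′_j = λ_j + j − 1` for `1 ≤ j ≤ m`. -/
def FrobB (k : ℕ) (α : ℕ → ℕ) (m : ℕ) (lam : ℕ → ℕ) : Prop :=
  (∀ j, 1 ≤ j → j ≤ m → 0 < lam j ∧ lam j ≤ k) ∧
  (∀ j j', 1 ≤ j → j < j' → j' ≤ m → lam j' < lam j) ∧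
  (∀ j, 1 ≤ j → j ≤ m → α j = lam j + j) ∧
  (∀ j, m < j → j ≤ k → α j ≤ m) ∧
  (∀ j, 1 ≤ j → j ≤ m →
    ((Finset.Icc 1 k).filter fun i => j ≤ α i).card = lam j + j - 1)

/-- `α ∈ 𝓑`. -/
def memB (k : ℕ) (α : ℕ → ℕ) : Prop := ∃ m lam, FrobB k α m lam

lemma mem_skewD {a b : ℕ} {lo hi : ℕ → ℕ} {p q : ℕ} :
    (p, q) ∈ skewD a b lo hi ↔ (a ≤ p ∧ p ≤ b) ∧ lo p ≤ q ∧ q ≤ hi p := by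
  simp only [skewD, Finset.mem_biUnion, Finset.mem_image, Finset.mem_Icc, Prod.mk.injEq]
  constructor
  · rintro ⟨i, hi1, j, hj, rfl, rfl⟩; exact ⟨hi1, hj⟩
  · rintro ⟨h1, h2⟩; exact ⟨p, h1, q, h2, rfl, rfl⟩

lemma arm_skewD {a b : ℕ} {lo hi : ℕ → ℕ} {p q : ℕ}
    (hp : a ≤ p ∧ p ≤ b) (hq : lo p ≤ q) :
    arm (skewD a b lo hi) (p, q) = hi p - q := by
  unfold arm
  have hset : (skewD a b lo hi).filter (fun y => y.1 = p ∧ q < y.2)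
      = (Finset.Icc (q + 1) (hi p)).image (fun c => (p, c)) := by
    ext ⟨x, y⟩
    simp only [Finset.mem_filter, Finset.mem_image, Finset.mem_Icc, Prod.mk.injEq]
    constructor
    · rintro ⟨hm, rfl, hy⟩
      rw [mem_skewD] at hm
      exact ⟨y, ⟨hy, hm.2.2⟩, rfl, rfl⟩
    · rintro ⟨c, ⟨hc1, hc2⟩, rfl, rfl⟩
      refine ⟨mem_skewD.mpr ⟨hp, le_trans hq (by omega), hc2⟩, rfl, by omega⟩
  rw [hset, Finset.card_image_of_injective _ (fun x y h => by simpa using h),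
    Nat.card_Icc]
  omega

/-- If `u` is the smallest row index of a cell of `T` with arm length `i−1`
strictly above the diagonal of `T`, and `α ∈ 𝓑` has diagonal length `m`,
then `u > m`. -/
theorem techprop_part2 (k : ℕ) (α : ℕ → ℕ) (hk : 0 < k)
    (hα1 : α 1 ≤ k + 1) (hmono : ∀ i j, 1 ≤ i → i ≤ j → j ≤ k → α j ≤ α i)
    (m : ℕ) (lam : ℕ → ℕ) (hB : FrobB k α m lam)
    (i : ℕ) (hi1 : 1 ≤ i) (hik : i ≤ k + 1) (u : ℕ)
    (hu : ∃ j, (u, j) ∈ TT (k + 1) k α ∧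
      arm (TT (k + 1) k α) (u, j) = i - 1 ∧ k + 1 + α 1 < u + j)
    (hmin : ∀ a j, (a, j) ∈ TT (k + 1) k α →
      arm (TT (k + 1) k α) (a, j) = i - 1 → k + 1 + α 1 < a + j → u ≤ a) :
    m < u := by
  obtain ⟨j, hmem, harm, hdiag⟩ := hu
  rw [TT, mem_skewD] at hmem
  obtain ⟨⟨hu1, huk⟩, hlo, hhi⟩ := hmem
  have hmu : α u ≤ α 1 := hmono 1 u le_rfl hu1 huk
  have harm' : arm (TT (k + 1) k α) (u, j) = (k + 1) + α 1 - α u - j := by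
    rw [TT, arm_skewD ⟨hu1, huk⟩ hlo]
  rw [harm'] at harm
  by_contra hcon
  push_neg at hcon
  have halu := (hB.2.2.1 u hu1 hcon)
  have hlu := (hB.1 u hu1 hcon).1
  omega
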